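/- arXiv:1801.06762 — 4 statements merged into one kernel-verified Lean document; each statement's English description precedes it below -/
import Mathlib

section
/- For every positive integer x and every m ∈ ℕ, the weight sequence W (2·P(2m+1)·x) (P(2m)·x) equals the concatenation, over j = m, m−1, …, 1, of the five-element lists [P(2j)·x, P(2j)·x, P(2j)·x, P(2j)·x, 2·P(2j−1)·x] (for m = 0 both sides are the empty list). -/
/-- Pell numbers: P 0 = 0, P 1 = 1, P (m+2) = 2·P (m+1) + P m. -/
def pell : ℕ → ℕ
  | 0 => 0
  | 1 => 1
  | m + 2 => 2 * pell (m + 1) + pell m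

/-- The weight sequence W x y: W x 0 = [] = W 0 y, and for x, y > 0,
if x ≤ y then W x y = x :: W x (y − x), while if y < x then W x y = W y x. -/
def wseq (x y : ℕ) : List ℕ :=
  if x = 0 then []
  else if y = 0 then []
  else if x ≤ y then x :: wseq x (y - x)
  else wseq y x
termination_by 2 * (x + y) + (if x ≤ y then 0 else 1)
decreasing_by
  all_goals simp_wf
  all_goals (repeat' split) <;> omega

lemma wseq_zero_right (x : ℕ) : wseq x 0 = [] := by
  rw [wseq]; split <;> simp

lemma wseq_step (x y : ℕ) (hx : 0 < x) (h : x ≤ y) :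
    wseq x y = x :: wseq x (y - x) := by
  rw [wseq, if_neg (by omega), if_neg (by omega), if_pos h]

lemma wseq_swap (x y : ℕ) (h : y < x) : wseq x y = wseq y x := by
  rcases Nat.eq_zero_or_pos y with hy | hy
  · subst hy
    rw [wseq_zero_right, wseq, if_pos rfl]
  · rw [wseq, if_neg (by omega), if_neg (by omega), if_neg (by omega)]

lemma wseq_swap_step (x y : ℕ) (hx : 0 < x) (h : x ≤ y) :
    wseq y x = x :: wseq x (y - x) := by
  rcases Nat.lt_or_ge x y with hlt | hge
  · rw [wseq_swap y x hlt, wseq_step x y hx h]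
  · have : x = y := le_antisymm h hge
    subst this
    rw [wseq_step x x hx le_rfl]

lemma pell_pos : ∀ n : ℕ, 0 < pell (n + 1)
  | 0 => by simp [pell]
  | 1 => by simp [pell]
  | n + 2 => by
    have := pell_pos n
    rw [pell]
    omega

theorem stmt_2 (x : ℕ) (hx : 0 < x) (m : ℕ) :
    wseq (2 * pell (2*m+1) * x) (pell (2*m) * x) =
      (List.range m).flatMap (fun t =>
        let j := m - t
        [pell (2*j) * x, pell (2*j) * x, pell (2*j) * x, pell (2*j) * x,
          2 * pell (2*j-1) * x]) := by
  induction m with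
  | zero => simp [pell, wseq_zero_right]
  | succ k ih =>
    have e1 : 2*(k+1)+1 = (2*k+1)+2 := by ring
    have e2 : 2*(k+1) = 2*k+2 := by ring
    have hp1 : pell (2*(k+1)+1) = 2 * pell (2*k+2) + pell (2*k+1) := by
      rw [e1, pell]
    have hp0 : pell (2*k+2) = 2 * pell (2*k+1) + pell (2*k) := by
      rw [pell]
    have ha : 0 < pell (2*k+1) := pell_pos _
    have hb : 0 < pell (2*k+2) := pell_pos _
    set a := pell (2*k+1) with hadef
    set b := pell (2*k+2) with hbdef
    -- LHS arguments
    have hbx : 0 < b * x := by positivity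
    have hax : 0 < 2 * a * x := by positivity
    rw [show pell (2*(k+1)) * x = b * x by rw [e2]]
    rw [hp1]
    -- wseq (2*(2b+a)*x) (b*x)
    have h1 : b * x < 2 * (2*b+a) * x := by nlinarith
    rw [wseq_swap _ _ h1]
    rw [wseq_step _ _ hbx (by nlinarith)]
    rw [show 2*(2*b+a)*x - b*x = (3*b+2*a)*x by rw [Nat.sub_eq_iff_eq_add (by nlinarith)]; ring]
    rw [wseq_step _ _ hbx (by nlinarith)]
    rw [show (3*b+2*a)*x - b*x = (2*b+2*a)*x by rw [Nat.sub_eq_iff_eq_add (by nlinarith)]; ring]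
    rw [wseq_step _ _ hbx (by nlinarith)]
    rw [show (2*b+2*a)*x - b*x = (b+2*a)*x by rw [Nat.sub_eq_iff_eq_add (by nlinarith)]; ring]
    rw [wseq_step _ _ hbx (by nlinarith)]
    rw [show (b+2*a)*x - b*x = 2*a*x by rw [Nat.sub_eq_iff_eq_add (by nlinarith)]; ring]
    -- wseq (b*x) (2*a*x), with 2*a*x ≤ b*x
    have h2 : 2*a*x ≤ b*x := by nlinarith [Nat.zero_le (pell (2*k))]
    rw [wseq_swap_step _ _ hax h2]
    rw [show b*x - 2*a*x = pell (2*k) * x by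
      rw [Nat.sub_eq_iff_eq_add h2]; rw [hp0]; ring]
    rw [show (2:ℕ)*a*x = 2 * pell (2*k+1) * x from rfl] at *
    rw [ih]
    -- Now match the RHS
    rw [List.range_succ_eq_map]
    simp only [List.flatMap_cons, List.flatMap_map, Nat.sub_zero, Nat.succ_sub_succ,
      List.cons_append, List.nil_append, Function.comp]
    rw [show 2*(k+1)-1 = 2*k+1 by omega, e2]
end

section
/- For all integers i, k ≥ 0 and n ≥ 2: ((a(i,k) : ℝ) − b(i,k))·((a(i,k) : ℝ) − L(n,k)·b(i,k)) ≤ 1. -/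
/-- Half-companion Pell numbers: H 0 = 1, H 1 = 1, H (m+2) = 2·H (m+1) + H m. -/
def hpell : ℕ → ℕ
  | 0 => 1
  | 1 => 1
  | m + 2 => 2 * hpell (m + 1) + hpell m

/-- The solution of x 0 = x0, x 1 = x1, x (i+2) = 2n·x (i+1) − x i. -/
def rec2 (n : ℕ) (x0 x1 : ℤ) : ℕ → ℤ
  | 0 => x0
  | 1 => x1
  | i + 2 => 2 * n * rec2 n x0 x1 (i + 1) - rec2 n x0 x1 i

/-- a i : a 0 = 1, a 1 = n. -/
def sa (n : ℕ) : ℕ → ℤ := rec2 n 1 n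
/-- b i : b 0 = 0, b 1 = 1. -/
def sb (n : ℕ) : ℕ → ℤ := rec2 n 0 1
/-- c i : c 0 = 1, c 1 = 2n+1. -/
def sc (n : ℕ) : ℕ → ℤ := rec2 n 1 (2 * n + 1)
/-- d i : d 0 = 1, d 1 = 1. -/
def sd (n : ℕ) : ℕ → ℤ := rec2 n 1 1

/-- X(i,k) = H(2k)·(a i + b i) + 2·P(2k)·n·(b i). -/
def XX (n i k : ℕ) : ℤ :=
  (hpell (2*k) : ℤ) * (sa n i + sb n i) + 2 * (pell (2*k) : ℤ) * n * sb n i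

/-- Δ(i,k) = P(2k)·(a i + b i) + H(2k)·n·(b i). -/
def DD (n i k : ℕ) : ℤ :=
  (pell (2*k) : ℤ) * (sa n i + sb n i) + (hpell (2*k) : ℤ) * n * sb n i

/-- a(i,k) = (X(i,k) + (a i − b i))/2. -/
def aik (n i k : ℕ) : ℤ := (XX n i k + (sa n i - sb n i)) / 2
/-- b(i,k) = (X(i,k) − (a i − b i))/2. -/
def bik (n i k : ℕ) : ℤ := (XX n i k - (sa n i - sb n i)) / 2
/-- c(i,k) = X(i,k) + Δ(i,k). -/
def cik (n i k : ℕ) : ℤ := XX n i k + DD n i k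
/-- d(i,k) = X(i,k) − Δ(i,k). -/
def dik (n i k : ℕ) : ℤ := XX n i k - DD n i k

/-- √(n²−1). -/
noncomputable def sqn (n : ℕ) : ℝ := Real.sqrt ((n : ℝ)^2 - 1)

/-- ω = n + √(n²−1). -/
noncomputable def om (n : ℕ) : ℝ := n + sqn n

/-- L(n,k) = (H(2k)·(√(n²−1)+1) + 2n·P(2k) + (√(n²−1)−1)) /
(H(2k)·(√(n²−1)+1) + 2n·P(2k) − (√(n²−1)−1)). -/
noncomputable def L (n k : ℕ) : ℝ :=
  ((hpell (2*k) : ℝ) * (sqn n + 1) + 2*n*(pell (2*k) : ℝ) + (sqn n - 1)) /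
  ((hpell (2*k) : ℝ) * (sqn n + 1) + 2*n*(pell (2*k) : ℝ) - (sqn n - 1))

/-- S(n,0) = (√(n²−1)+1+n)/(√(n²−1)+1−n); for k ≥ 1,
S(n,k) = ((√(n²−1)+1)·P(2k+1) + n·H(2k+1)) / ((√(n²−1)+1)·P(2k−1) + n·H(2k−1)). -/
noncomputable def S (n k : ℕ) : ℝ :=
  if k = 0 then (sqn n + 1 + n) / (sqn n + 1 - n)
  else ((sqn n + 1) * (pell (2*k+1) : ℝ) + n * (hpell (2*k+1) : ℝ)) /
       ((sqn n + 1) * (pell (2*k-1) : ℝ) + n * (hpell (2*k-1) : ℝ))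


/-!
Write `w = √(n²−1)`, `ω = n + w`, `H = H(2k)`, `P = P(2k)` and `a = a i`, `b = b i`.
Since `a + w b = ωⁱ` and `a − w b = ω⁻ⁱ`, we have `b ≥ 0` and `(a − b)(a − w b) ≤ (a + w b)(a − w b) = 1`.
The Brahmagupta transform leaves `a(i,k) − b(i,k) = a − b` unchanged, and a direct computation gives
`a(i,k) − L·b(i,k) = (a − w b) · 2(H + nP) / D`, where `D` is the denominator of `L`.
Finally `D − 2(H + nP) = (H − 1)(w − 1) ≥ 0`, so the factor `2(H + nP) / D` lies in `[0, 1]`.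
-/

lemma hpell_odd : ∀ m, Odd (hpell m)
  | 0 => odd_one
  | 1 => odd_one
  | m + 2 => by
    rw [hpell]
    exact (even_two_mul _).add_odd (hpell_odd m)

lemma sa_add_mul_sb_eq_pow {R : Type*} [CommRing R] (n : ℕ) {t : R}
    (ht : t ^ 2 = 2 * n * t - 1) : ∀ i, (sa n i : R) + (t - n) * sb n i = t ^ i
  | 0 => by simp [sa, sb, rec2]
  | 1 => by simp [sa, sb, rec2]
  | i + 2 => by
    have ih₀ := sa_add_mul_sb_eq_pow n ht i
    have ih₁ := sa_add_mul_sb_eq_pow n ht (i + 1)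
    simp only [sa, sb, rec2] at ih₀ ih₁ ⊢
    push_cast
    linear_combination 2 * (n : R) * ih₁ - ih₀ - t ^ i * ht

lemma sqn_le (n : ℕ) : sqn n ≤ n := by
  rw [sqn, Real.sqrt_le_left (Nat.cast_nonneg n)]
  linarith

section PellEquation

variable {n : ℕ}

lemma sqn_sq (hn : 1 ≤ n) : sqn n ^ 2 = (n : ℝ) ^ 2 - 1 := by
  have : (1 : ℝ) ≤ n := by exact_mod_cast hn
  exact Real.sq_sqrt (by nlinarith)

lemma one_le_sqn (hn : 2 ≤ n) : 1 ≤ sqn n := by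
  have : (2 : ℝ) ≤ n := by exact_mod_cast hn
  rw [sqn, Real.one_le_sqrt]
  nlinarith

lemma sa_add_sqn_mul_sb (hn : 1 ≤ n) (i : ℕ) : (sa n i : ℝ) + sqn n * sb n i = om n ^ i := by
  have h := sa_add_mul_sb_eq_pow n (t := om n) (by rw [om]; linear_combination sqn_sq hn) i
  rwa [om, add_sub_cancel_left] at h

lemma sa_sub_sqn_mul_sb (hn : 1 ≤ n) (i : ℕ) :
    (sa n i : ℝ) - sqn n * sb n i = ((n : ℝ) - sqn n) ^ i := by
  have h := sa_add_mul_sb_eq_pow n (t := (n : ℝ) - sqn n) (by linear_combination sqn_sq hn) i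
  rwa [sub_sub_cancel_left, neg_mul, ← sub_eq_add_neg] at h

lemma sb_nonneg (hn : 2 ≤ n) (i : ℕ) : (0 : ℝ) ≤ sb n i := by
  have hw := one_le_sqn hn
  have hpow : ((n : ℝ) - sqn n) ^ i ≤ om n ^ i :=
    pow_le_pow_left₀ (sub_nonneg.2 (sqn_le n)) (by rw [om]; linarith) i
  rw [← sa_add_sqn_mul_sb (by omega), ← sa_sub_sqn_mul_sb (by omega)] at hpow
  nlinarith

lemma sa_sub_sb_mul_sa_sub_sqn_mul_sb_le_one (hn : 2 ≤ n) (i : ℕ) :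
    ((sa n i : ℝ) - sb n i) * (sa n i - sqn n * sb n i) ≤ 1 := by
  have hw := one_le_sqn hn
  have hb := sb_nonneg hn i
  have hpos : 0 ≤ (sa n i : ℝ) - sqn n * sb n i := by
    rw [sa_sub_sqn_mul_sb (by omega)]
    exact pow_nonneg (sub_nonneg.2 (sqn_le n)) i
  have hnorm : ((sa n i : ℝ) + sqn n * sb n i) * (sa n i - sqn n * sb n i) = 1 := by
    rw [sa_add_sqn_mul_sb (by omega), sa_sub_sqn_mul_sb (by omega), ← mul_pow, om]
    simp [← sq_sub_sq, sqn_sq (show 1 ≤ n by omega)]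
  calc ((sa n i : ℝ) - sb n i) * (sa n i - sqn n * sb n i)
      ≤ ((sa n i : ℝ) + sqn n * sb n i) * (sa n i - sqn n * sb n i) :=
        mul_le_mul_of_nonneg_right (by nlinarith) hpos
    _ = 1 := hnorm

end PellEquation

section BrahmaguptaTransform

variable (n i k : ℕ)

lemma two_dvd_XX_add_sa_sub_sb : (2 : ℤ) ∣ XX n i k + (sa n i - sb n i) := by
  obtain ⟨m, hm⟩ := hpell_odd (2 * k)
  exact ⟨m * (sa n i + sb n i) + sa n i + pell (2 * k) * n * sb n i, by rw [XX, hm]; push_cast; ring⟩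

lemma aik_cast : (aik n i k : ℝ) = ((XX n i k : ℝ) + (sa n i - sb n i)) / 2 := by
  rw [aik, Int.cast_div (two_dvd_XX_add_sa_sub_sb n i k) two_ne_zero]
  push_cast
  rfl

lemma bik_cast : (bik n i k : ℝ) = ((XX n i k : ℝ) - (sa n i - sb n i)) / 2 := by
  have hdvd : (2 : ℤ) ∣ XX n i k - (sa n i - sb n i) := by
    have h := (two_dvd_XX_add_sa_sub_sb n i k).sub (dvd_mul_right 2 (sa n i - sb n i))
    rwa [show XX n i k + (sa n i - sb n i) - 2 * (sa n i - sb n i) = XX n i k - (sa n i - sb n i)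
      by ring] at h
  rw [bik, Int.cast_div hdvd two_ne_zero]
  push_cast
  rfl

lemma aik_sub_bik_cast : (aik n i k : ℝ) - bik n i k = sa n i - sb n i := by
  rw [aik_cast, bik_cast]
  ring

noncomputable def denomL : ℝ :=
  (hpell (2 * k) : ℝ) * (sqn n + 1) + 2 * n * (pell (2 * k) : ℝ) - (sqn n - 1)

lemma aik_sub_L_mul_bik (hD : denomL n k ≠ 0) :
    (aik n i k : ℝ) - L n k * bik n i k =
      (sa n i - sqn n * sb n i) * (2 * (hpell (2 * k) + n * pell (2 * k)) / denomL n k) := by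
  rw [denomL] at hD
  rw [aik_cast, bik_cast, L, XX, denomL]
  field_simp
  push_cast
  ring

variable {n}

lemma two_mul_le_denomL (hn : 2 ≤ n) :
    2 * ((hpell (2 * k) : ℝ) + n * pell (2 * k)) ≤ denomL n k := by
  have hH : (1 : ℝ) ≤ hpell (2 * k) := by exact_mod_cast (hpell_odd (2 * k)).pos
  have hw := one_le_sqn hn
  rw [denomL]
  nlinarith [mul_nonneg (sub_nonneg.2 hH) (sub_nonneg.2 hw)]

end BrahmaguptaTransform

theorem stmt_8 (n i k : ℕ) (hn : 2 ≤ n) :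
    ((aik n i k : ℝ) - (bik n i k : ℝ)) * ((aik n i k : ℝ) - L n k * (bik n i k : ℝ)) ≤ 1 := by
  have hnum : 0 < 2 * ((hpell (2 * k) : ℝ) + n * pell (2 * k)) := by
    have : (0 : ℝ) < hpell (2 * k) := by exact_mod_cast (hpell_odd (2 * k)).pos
    positivity
  have hden := two_mul_le_denomL k hn
  set r := 2 * ((hpell (2 * k) : ℝ) + n * pell (2 * k)) / denomL n k
  have hr0 : 0 ≤ r := div_nonneg hnum.le (hnum.trans_le hden).le
  have hr1 : r ≤ 1 := (div_le_one (hnum.trans_le hden)).2 hden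
  have hx := sa_sub_sb_mul_sa_sub_sqn_mul_sb_le_one hn i
  rw [aik_sub_bik_cast, aik_sub_L_mul_bik n i k (hnum.trans_le hden).ne', ← mul_assoc]
  nlinarith [mul_nonneg (sub_nonneg.2 hx) hr0]
end

section
/- For every integer n ≥ 2: 2n + 2 < S(n,0) < 2n + 2 + 1/(2n − 2). Moreover, for every integer k ≥ 1: P(2k+4)/P(2k+2) < S(n,k) < S(n+1,k) < P(2k+2)/P(2k). -/
/-!
For `k ≥ 1` and `x = (√(n²-1) + 1) / n`, `S(n,k) = f(x)` for the Möbius map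
`f(x) = (x P(2k+1) + H(2k+1)) / (x P(2k-1) + H(2k-1))`. A Cassini-type identity gives its
determinant `P(2k+1) H(2k-1) - H(2k+1) P(2k-1) = -2`, so `f` is strictly decreasing on `x ≥ 0`.
Since `P(m) + H(m) = P(m+1)` and `7 P(m) + 5 H(m) = P(m+3)`, the bounds are the values
`f(1) = P(2k+2)/P(2k)` and `f(7/5) = P(2k+4)/P(2k+2)`, and everything follows from
`1 < x(n+1) < x(n) < 7/5`. The bounds on `S(n,0)` reduce, after rationalising, to polynomial
inequalities in `n` and `√(n²-1)`.
-/

lemma pell_add_two (m : ℕ) : pell (m + 2) = 2 * pell (m + 1) + pell m := rfl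

lemma hpell_add_two (m : ℕ) : hpell (m + 2) = 2 * hpell (m + 1) + hpell m := rfl

lemma hpell_pos : ∀ m, 0 < hpell m
  | 0 | 1 => one_pos
  | m + 2 => by rw [hpell_add_two]; have := hpell_pos (m + 1); omega

lemma pell_add_hpell : ∀ m, pell m + hpell m = pell (m + 1)
  | 0 | 1 => rfl
  | m + 2 => by
      have : pell (m + 1) + hpell (m + 1) = pell (m + 2) := pell_add_hpell (m + 1)
      have := pell_add_hpell m
      have := pell_add_two m
      have := hpell_add_two m
      have : pell (m + 2 + 1) = 2 * pell (m + 2) + pell (m + 1) := rfl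
      omega

lemma seven_mul_pell_add_five_mul_hpell (m : ℕ) :
    7 * pell m + 5 * hpell m = pell (m + 3) := by
  rw [pell_add_two (m + 1), pell_add_two, ← pell_add_hpell]
  ring

lemma pell_succ_mul_hpell_sub (m : ℕ) :
    (pell (m + 1) * hpell m : ℤ) - hpell (m + 1) * pell m = (-1) ^ m := by
  induction m with
  | zero => rfl
  | succ m ih =>
    rw [pell_add_two, hpell_add_two, pow_succ, ← ih]
    push_cast
    ring

lemma pell_add_two_mul_hpell_sub (m : ℕ) :
    (pell (m + 2) * hpell m : ℤ) - hpell (m + 2) * pell m = 2 * (-1) ^ m := by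
  rw [pell_add_two, hpell_add_two, ← pell_succ_mul_hpell_sub]
  push_cast
  ring

noncomputable def pellRatio (m : ℕ) (x : ℝ) : ℝ :=
  (x * pell (m + 2) + hpell (m + 2)) / (x * pell m + hpell m)

lemma pellRatio_one (m : ℕ) : pellRatio m 1 = pell (m + 3) / pell (m + 1) := by
  have h2 : (pell (m + 2) + hpell (m + 2) : ℝ) = pell (m + 3) := by
    exact_mod_cast pell_add_hpell (m + 2)
  have h0 : (pell m + hpell m : ℝ) = pell (m + 1) := by exact_mod_cast pell_add_hpell m
  simp only [pellRatio, one_mul, h2, h0]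

lemma pellRatio_seven_div_five (m : ℕ) : pellRatio m (7 / 5) = pell (m + 5) / pell (m + 3) := by
  have key (i : ℕ) : (7 / 5 : ℝ) * pell i + hpell i = pell (i + 3) / 5 := by
    rw [← seven_mul_pell_add_five_mul_hpell]
    push_cast
    ring
  rw [pellRatio, key, key, div_div_div_cancel_right₀ (by norm_num)]

lemma pellRatio_denom_pos (m : ℕ) {x : ℝ} (hx : 0 ≤ x) : 0 < x * pell m + hpell m := by
  have := hpell_pos m
  positivity

lemma strictAntiOn_pellRatio {m : ℕ} (hm : Odd m) : StrictAntiOn (pellRatio m) (Set.Ici 0) := by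
  intro x hx y hy hxy
  have hdet : (pell (m + 2) * hpell m : ℝ) - hpell (m + 2) * pell m = -2 := by
    exact_mod_cast (pell_add_two_mul_hpell_sub m).trans (by rw [hm.neg_one_pow]; rfl)
  rw [pellRatio, pellRatio, div_lt_div_iff₀ (pellRatio_denom_pos m hy) (pellRatio_denom_pos m hx)]
  linear_combination (y - x) * hdet + 2 * hxy

section sqn

variable {n : ℕ}

lemma sq_sqn (hn : 1 ≤ n) : sqn n ^ 2 = n ^ 2 - 1 := by
  have : (1 : ℝ) ≤ n := by exact_mod_cast hn
  exact Real.sq_sqrt (by nlinarith)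

lemma sqn_nonneg (n : ℕ) : 0 ≤ sqn n := Real.sqrt_nonneg _

lemma sqn_lt (hn : 1 ≤ n) : sqn n < n :=
  lt_of_pow_lt_pow_left₀ 2 (Nat.cast_nonneg n) (by rw [sq_sqn hn]; linarith)

lemma sub_one_lt_sqn (hn : 2 ≤ n) : (n : ℝ) - 1 < sqn n := by
  have : (2 : ℝ) ≤ n := by exact_mod_cast hn
  exact lt_of_pow_lt_pow_left₀ 2 (sqn_nonneg n) (by rw [sq_sqn (by omega)]; nlinarith)

lemma S_zero_sub (hn : 2 ≤ n) :
    S n 0 - (2 * n + 2) = (n - sqn n + 1) / (n + sqn n - 1) := by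
  have hn' : (2 : ℝ) ≤ n := by exact_mod_cast hn
  have hs := sub_one_lt_sqn hn
  have : sqn n + 1 - n ≠ 0 := by linarith
  have : (n : ℝ) + sqn n - 1 ≠ 0 := by linarith
  rw [S, if_pos rfl]
  field_simp
  linear_combination (-2 * (n : ℝ)) * sq_sqn (n := n) (by omega)

lemma two_mul_add_two_lt_S_zero (hn : 2 ≤ n) : 2 * (n : ℝ) + 2 < S n 0 := by
  have hn' : (2 : ℝ) ≤ n := by exact_mod_cast hn
  have : 0 < S n 0 - (2 * n + 2) := by
    rw [S_zero_sub hn]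
    exact div_pos (by linarith [sqn_lt (n := n) (by omega)]) (by linarith [sub_one_lt_sqn hn])
  linarith

lemma S_zero_lt (hn : 2 ≤ n) : S n 0 < 2 * (n : ℝ) + 2 + 1 / (2 * n - 2) := by
  have hn' : (2 : ℝ) ≤ n := by exact_mod_cast hn
  have hs := sub_one_lt_sqn hn
  -- squared, this is `(2n+1)²(n-1) < (n+1)(2n-1)²`, i.e. `-1 < 1`
  have key : (2 * (n : ℝ) + 1) * (n - 1) < (2 * n - 1) * sqn n := by
    refine lt_of_pow_lt_pow_left₀ 2 (by nlinarith) ?_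
    rw [mul_pow, mul_pow, sq_sqn (by omega)]
    nlinarith
  suffices S n 0 - (2 * n + 2) < 1 / (2 * n - 2) by linarith
  rw [S_zero_sub hn, div_lt_div_iff₀ (by linarith) (by linarith)]
  linarith

noncomputable def sqnRatio (n : ℕ) : ℝ := (sqn n + 1) / n

lemma S_succ_eq_pellRatio (hn : 1 ≤ n) (j : ℕ) :
    S n (j + 1) = pellRatio (2 * j + 1) (sqnRatio n) := by
  have hn' : (n : ℝ) ≠ 0 := by positivity
  rw [S, if_neg (by omega), pellRatio, sqnRatio, show 2 * (j + 1) + 1 = 2 * j + 1 + 2 by ring,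
    show 2 * (j + 1) - 1 = 2 * j + 1 by omega]
  field_simp

lemma one_lt_sqnRatio (hn : 2 ≤ n) : 1 < sqnRatio n := by
  rw [sqnRatio, one_lt_div (by positivity)]
  linarith [sub_one_lt_sqn hn]

lemma sqnRatio_lt_seven_div_five (hn : 2 ≤ n) : sqnRatio n < 7 / 5 := by
  have hn' : (2 : ℝ) ≤ n := by exact_mod_cast hn
  rw [sqnRatio, div_lt_iff₀ (by positivity)]
  -- squared: `25 (n² - 1) < (7n - 5)²`, i.e. `0 < (4n - 5)(6n - 10)`
  have : 5 * sqn n < 7 * n - 5 := by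
    refine lt_of_pow_lt_pow_left₀ 2 (by linarith) ?_
    rw [mul_pow, sq_sqn (by omega)]
    nlinarith
  linarith

lemma sqnRatio_succ_lt (hn : 2 ≤ n) : sqnRatio (n + 1) < sqnRatio n := by
  have hs := sub_one_lt_sqn hn
  have hn' : (2 : ℝ) ≤ n := by exact_mod_cast hn
  have hsq' := sq_sqn (n := n + 1) (by omega)
  push_cast at hsq'
  rw [sqnRatio, sqnRatio, div_lt_div_iff₀ (by positivity) (by positivity)]
  push_cast
  -- squared, the difference is `2 (n + 1) √(n²-1) - 2n > 0`
  have : n * sqn (n + 1) < (n + 1) * sqn n + 1 := by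
    have : (n : ℝ) < (n + 1) * sqn n := by nlinarith
    refine lt_of_pow_lt_pow_left₀ 2 (by nlinarith) ?_
    rw [mul_pow, hsq']
    nlinarith [sq_sqn (n := n) (by omega)]
  linarith

end sqn

theorem stmt_11 (n : ℕ) (hn : 2 ≤ n) :
    (2*(n:ℝ) + 2 < S n 0 ∧ S n 0 < 2*(n:ℝ) + 2 + 1/(2*(n:ℝ) - 2)) ∧
    ∀ k : ℕ, 1 ≤ k →
      (pell (2*k+4) : ℝ) / (pell (2*k+2) : ℝ) < S n k ∧
      S n k < S (n+1) k ∧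
      S (n+1) k < (pell (2*k+2) : ℝ) / (pell (2*k) : ℝ) := by
  refine ⟨⟨two_mul_add_two_lt_S_zero hn, S_zero_lt hn⟩, fun k hk => ?_⟩
  obtain ⟨j, rfl⟩ : ∃ j, k = j + 1 := ⟨k - 1, by omega⟩
  have hxn := one_lt_sqnRatio hn
  have hxn1 := one_lt_sqnRatio (n := n + 1) (by omega)
  have hf := strictAntiOn_pellRatio (odd_two_mul_add_one j)
  rw [S_succ_eq_pellRatio (by omega), S_succ_eq_pellRatio (by omega)]
  refine ⟨?_, ?_, ?_⟩
  · rw [show 2 * (j + 1) + 4 = 2 * j + 1 + 5 by ring, show 2 * (j + 1) + 2 = 2 * j + 1 + 3 by ring,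
      ← pellRatio_seven_div_five]
    exact hf (zero_lt_one.trans hxn).le (by norm_num) (sqnRatio_lt_seven_div_five hn)
  · exact hf (zero_lt_one.trans hxn1).le (zero_lt_one.trans hxn).le (sqnRatio_succ_lt hn)
  · rw [show 2 * (j + 1) + 2 = 2 * j + 1 + 3 by ring, show 2 * (j + 1) = 2 * j + 1 + 1 by ring,
      ← pellRatio_one]
    exact hf (by norm_num) (zero_lt_one.trans hxn1).le hxn1
end

section
/- For all integers n ≥ 2 and k ≥ 0, setting A = (n·(H(2k+1)+1) + 2·P(2k+1))/2, B = (n·(H(2k+1)−1) + 2·P(2k+1))/2 and D = n·P(2k) + H(2k) (the first two entries and the small weight of the class A_{1,n+1}^{(k)}), one has D·S(n,k)/(A + L(n,k)·B) = √(S(n,k)/(2·L(n,k))); that is, the obstruction Γ from A_{1,n+1}^{(k)} evaluated at the accumulation point S(n,k) with aspect ratio L(n,k) equals the volume bound. -/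
/-! With s = √(n²-1), p = P(2k), h = H(2k) (so h² = 2p² + 1 and P(2k+1) = p + h,
H(2k+1) = 2p + h), both S = Sn/Sd and L = Ln/Ld are quotients of expressions linear in s. Two
polynomial identities, Ln·Ld = 2·Sn·Sd (using s² = n² - 1 and h² = 2p² + 1) and
A·Ld + B·Ln = 2·D·Sn (using h² = 2p² + 1 only), show that both sides equal Ld/(2·Sd). -/

theorem eq_sqrt_of_two_mul_mul_sq_eq {D S L A B T : ℝ} (hT : 0 ≤ T) (hDS : D * S ≠ 0)
    (hL : 2 * L * T ^ 2 = S) (hT_mul : T * (A + L * B) = D * S) :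
    D * S / (A + L * B) = √(S / (2 * L)) := by
  have hAB : A + L * B ≠ 0 := by
    rintro h
    rw [h, mul_zero] at hT_mul
    exact hDS hT_mul.symm
  have hL0 : L ≠ 0 := by
    rintro rfl
    exact hDS (by rw [← hL]; ring)
  rw [← hT_mul, mul_div_cancel_right₀ _ hAB, ← hL,
    mul_div_cancel_left₀ _ (mul_ne_zero two_ne_zero hL0), Real.sqrt_sq hT]

section

variable {n s p h : ℝ}

theorem obstruction_eq_sqrt_volume (hn : 1 < n) (hs : s ^ 2 = n ^ 2 - 1) (hs0 : 0 ≤ s)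
    (hh : h ^ 2 = 2 * p ^ 2 + 1) (hp : 0 ≤ p) (hh0 : 0 ≤ h) :
    (n * p + h) * (((s + 1) * (p + h) + n * (2 * p + h)) / ((s + 1) * (h - p) + n * (2 * p - h))) /
      ((n * ((2 * p + h) + 1) + 2 * (p + h)) / 2 +
        ((h * (s + 1) + 2 * n * p + (s - 1)) / (h * (s + 1) + 2 * n * p - (s - 1))) *
          ((n * ((2 * p + h) - 1) + 2 * (p + h)) / 2)) =
    √((((s + 1) * (p + h) + n * (2 * p + h)) / ((s + 1) * (h - p) + n * (2 * p - h))) /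
      (2 * ((h * (s + 1) + 2 * n * p + (s - 1)) / (h * (s + 1) + 2 * n * p - (s - 1))))) := by
  have hsn : n - 1 < s := by nlinarith
  have hph : p < h := by nlinarith
  have hSd : 0 < (s + 1) * (h - p) + n * (2 * p - h) := by nlinarith
  have hSn : 0 < (s + 1) * (p + h) + n * (2 * p + h) := by nlinarith
  have hLd : 0 < h * (s + 1) + 2 * n * p - (s - 1) := by nlinarith
  have hD : 0 < n * p + h := by nlinarith
  have hL : (h * (s + 1) + 2 * n * p + (s - 1)) * (h * (s + 1) + 2 * n * p - (s - 1)) =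
      2 * ((s + 1) * (p + h) + n * (2 * p + h)) * ((s + 1) * (h - p) + n * (2 * p - h)) := by
    linear_combination (2 * n ^ 2 - (s + 1) ^ 2) * hh - 2 * hs
  have hAB : (n * ((2 * p + h) + 1) + 2 * (p + h)) / 2 * (h * (s + 1) + 2 * n * p - (s - 1)) +
      (n * ((2 * p + h) - 1) + 2 * (p + h)) / 2 * (h * (s + 1) + 2 * n * p + (s - 1)) =
      2 * (n * p + h) * ((s + 1) * (p + h) + n * (2 * p + h)) := by
    linear_combination n * (s - 1) * hh
  refine eq_sqrt_of_two_mul_mul_sq_eq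
    (T := (h * (s + 1) + 2 * n * p - (s - 1)) / (2 * ((s + 1) * (h - p) + n * (2 * p - h))))
    (by positivity) (by positivity) ?_ ?_
  · field_simp
    linear_combination hL
  · field_simp
    linear_combination 2 * hAB

end

theorem pell_succ_and_hpell_succ (m : ℕ) :
    pell (m + 1) = pell m + hpell m ∧ hpell (m + 1) = 2 * pell m + hpell m := by
  induction m with
  | zero => exact ⟨rfl, rfl⟩
  | succ m ih =>
    rw [pell, hpell]
    omega

theorem pell_succ (m : ℕ) : pell (m + 1) = pell m + hpell m :=
  (pell_succ_and_hpell_succ m).1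

theorem hpell_succ (m : ℕ) : hpell (m + 1) = 2 * pell m + hpell m :=
  (pell_succ_and_hpell_succ m).2

theorem hpell_sq_sub_two_mul_pell_sq (m : ℕ) :
    (hpell m : ℤ) ^ 2 - 2 * pell m ^ 2 = (-1) ^ m := by
  induction m with
  | zero => simp [pell, hpell]
  | succ m ih =>
    push_cast [pell_succ, hpell_succ]
    linear_combination -ih

theorem hpell_two_mul_sq (k : ℕ) : (hpell (2 * k) : ℝ) ^ 2 = 2 * pell (2 * k) ^ 2 + 1 := by
  have h := hpell_sq_sub_two_mul_pell_sq (2 * k)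
  rw [pow_mul, neg_one_sq, one_pow] at h
  exact_mod_cast (by linear_combination h : (hpell (2 * k) : ℤ) ^ 2 = 2 * pell (2 * k) ^ 2 + 1)

-- Run backwards, the recurrences give P(2k-1) = H(2k) - P(2k) and H(2k-1) = 2P(2k) - H(2k); at
-- k = 0 these are 1 and -1, which is why the special case S(n,0) fits the same formula.
theorem S_eq_div (n k : ℕ) :
    S n k = ((sqn n + 1) * (pell (2 * k) + hpell (2 * k)) + n * (2 * pell (2 * k) + hpell (2 * k))) /
      ((sqn n + 1) * (hpell (2 * k) - pell (2 * k)) + n * (2 * pell (2 * k) - hpell (2 * k))) := by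
  rcases k with _ | k
  · simp only [S, ↓reduceIte, pell, hpell]
    push_cast
    ring
  · rw [S, if_neg k.succ_ne_zero, show 2 * (k + 1) = 2 * k + 1 + 1 by ring,
      show 2 * k + 1 + 1 - 1 = 2 * k + 1 by omega, pell_succ (2 * k + 1 + 1),
      hpell_succ (2 * k + 1 + 1), pell_succ (2 * k + 1), hpell_succ (2 * k + 1)]
    push_cast
    ring

theorem stmt_15 (n k : ℕ) (hn : 2 ≤ n) :
    ((n : ℝ) * (pell (2*k) : ℝ) + (hpell (2*k) : ℝ)) * S n k /
      (((n : ℝ) * ((hpell (2*k+1) : ℝ) + 1) + 2 * (pell (2*k+1) : ℝ)) / 2 +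
        L n k * (((n : ℝ) * ((hpell (2*k+1) : ℝ) - 1) + 2 * (pell (2*k+1) : ℝ)) / 2)) =
    Real.sqrt (S n k / (2 * L n k)) := by
  have hn' : (1 : ℝ) < n := by exact_mod_cast hn
  rw [S_eq_div, L, pell_succ, hpell_succ]
  push_cast
  exact obstruction_eq_sqrt_volume hn' (Real.sq_sqrt (by nlinarith)) (Real.sqrt_nonneg _)
    (hpell_two_mul_sq k) (Nat.cast_nonneg _) (Nat.cast_nonneg _)
end
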